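/- arXiv:2012.15411 — 3 statements merged into one kernel-verified Lean document; each statement's English description precedes it below -/
import Mathlib

section
/- Let $f:\mathbb{R}^n \to \mathbb{R}$ be $\mu$-strongly convex and differentiable, let $h:\mathbb{R}^n \to \mathbb{R}\cup\{\infty\}$ be proper closed convex, and let $\phi = f + h$ have minimizer $x^*$ with value $\phi^*$. Fix $x_k \in \mathbb{R}^n$, $g_k \in \mathbb{R}^n$, $\alpha_k > 0$ with $\mu\alpha_k \le 1$, and let $x_{k+1} = \arg\min_x \, f(x_k) + g_k^T(x - x_k) + \frac{1}{2\alpha_k}\|x - x_k\|^2 + h(x)$. If $\nabla f$ is $L$-Lipschitz, then $\phi(x_{k+1}) - \phi^* \le (1 - \mu\alpha_k)(\phi(x_k) - \phi^*) + (\nabla f(x_k) - g_k)^T(x_{k+1} - x_k) + (g_k - \nabla f(x_k))^T(\tilde{x}_k - x_k) - \left(\frac{1}{2\alpha_k} - \frac{L}{2}\right)\|x_{k+1} - x_k\|^2$, where $\tilde{x}_k = \mu\alpha_k x^* + (1 - \mu\alpha_k)x_k$. -/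
/-!
By the descent lemma, `φ(x_{k+1})` is at most the proximal model at `x_{k+1}` plus the gradient
error and the quadratic correction. Optimality of `x_{k+1}` lets us replace the model at `x_{k+1}`
by the model at `x̃ₖ = xₖ + μαₖ (x* - xₖ)`, and there strong convexity of `f` together with
convexity of `h` along the segment `[xₖ, x*]` bounds the model by
`μαₖ φ(x*) + (1 - μαₖ) φ(xₖ)`, up to the error term `⟪gₖ - ∇f(xₖ), x̃ₖ - xₖ⟫`.
-/

open scoped RealInnerProductSpace NNReal

section

variable {E : Type*} [NormedAddCommGroup E] [InnerProductSpace ℝ E]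

theorem le_add_inner_add_sq_of_lipschitzWith_gradient [CompleteSpace E] {f : E → ℝ}
    {f' : E → E} {K : ℝ≥0} (hf : ∀ x, HasGradientAt f (f' x) x) (hlip : LipschitzWith K f')
    (x y : E) : f y ≤ f x + ⟪f' x, y - x⟫ + K / 2 * ‖y - x‖ ^ 2 := by
  set v := y - x
  have hφ : ∀ t : ℝ, HasDerivAt (fun s : ℝ => f (x + s • v)) ⟪f' (x + t • v), v⟫ t := by
    intro t
    have hline : HasDerivAt (fun s : ℝ => x + s • v) v t := by
      simpa using ((hasDerivAt_id t).smul_const v).const_add x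
    have := (hf (x + t • v)).hasFDerivAt.comp_hasDerivAt t hline
    simp only [Function.comp_def, InnerProductSpace.toDual_apply_apply] at this
    exact this
  have hB : ∀ t : ℝ, HasDerivAt (fun s => f x + s * ⟪f' x, v⟫ + K / 2 * s ^ 2 * ‖v‖ ^ 2)
      (⟪f' x, v⟫ + K * t * ‖v‖ ^ 2) t := by
    intro t
    exact ((((hasDerivAt_id t).mul_const _).const_add (f x)).add
      (((hasDerivAt_pow 2 t).const_mul ((K : ℝ) / 2)).mul_const (‖v‖ ^ 2))).congr_deriv
      (by push_cast; ring)
  have hslope : ∀ t : ℝ, 0 ≤ t → ⟪f' (x + t • v), v⟫ ≤ ⟪f' x, v⟫ + K * t * ‖v‖ ^ 2 := by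
    intro t ht
    calc ⟪f' (x + t • v), v⟫ = ⟪f' x, v⟫ + ⟪f' (x + t • v) - f' x, v⟫ := by
          rw [inner_sub_left]; ring
      _ ≤ ⟪f' x, v⟫ + ‖f' (x + t • v) - f' x‖ * ‖v‖ := by
          gcongr; exact real_inner_le_norm _ _
      _ ≤ ⟪f' x, v⟫ + K * ‖t • v‖ * ‖v‖ := by
          gcongr; simpa [dist_eq_norm] using hlip.dist_le_mul (x + t • v) x
      _ = ⟪f' x, v⟫ + K * t * ‖v‖ ^ 2 := by
          rw [norm_smul, Real.norm_of_nonneg ht]; ring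
  have := image_le_of_deriv_right_le_deriv_boundary
    (continuous_iff_continuousAt.2 fun t => (hφ t).continuousAt).continuousOn
    (fun t _ => (hφ t).hasDerivWithinAt) (by simp)
    (continuous_iff_continuousAt.2 fun t => (hB t).continuousAt).continuousOn
    (fun t _ => (hB t).hasDerivWithinAt) (fun t ht => hslope t ht.1)
    (Set.right_mem_Icc.2 zero_le_one)
  simpa [v] using this

/-- The proximal gradient step of the paper is `x_{k+1} = argmin (proxModel f h gₖ αₖ xₖ)`. -/
noncomputable def proxModel (f h : E → ℝ) (g : E) (α : ℝ) (x y : E) : ℝ :=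
  f x + ⟪g, y - x⟫ + 1 / (2 * α) * ‖y - x‖ ^ 2 + h y

theorem add_le_proxModel_add_inner [CompleteSpace E] {f h : E → ℝ} {f' : E → E} {K : ℝ≥0}
    (hf : ∀ x, HasGradientAt f (f' x) x) (hlip : LipschitzWith K f') (g : E) (α : ℝ)
    (x y : E) :
    f y + h y ≤ proxModel f h g α x y + ⟪f' x - g, y - x⟫
      - (1 / (2 * α) - K / 2) * ‖y - x‖ ^ 2 := by
  have hdescent := le_add_inner_add_sq_of_lipschitzWith_gradient hf hlip x y
  rw [proxModel, inner_sub_left]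
  linarith

/-- With `μ α ≤ 1`, the proximal term at `x + μα (z - x)` is exactly `μα` times the
strong-convexity term `μ/2 ‖z - x‖²`. -/
theorem proxModel_convexCombination_le {f h : E → ℝ} {f' : E → E} {μ α : ℝ} (hμ : 0 ≤ μ)
    (hα : 0 < α) (hμα : μ * α ≤ 1) (hh : ConvexOn ℝ Set.univ h) {x z : E}
    (hsc : f x + ⟪f' x, z - x⟫ + μ / 2 * ‖z - x‖ ^ 2 ≤ f z) (g : E) :
    proxModel f h g α x ((μ * α) • z + (1 - μ * α) • x)
      ≤ μ * α * (f z + h z) + (1 - μ * α) * (f x + h x)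
        + ⟪g - f' x, (μ * α) • z + (1 - μ * α) • x - x⟫ := by
  have ha : 0 ≤ μ * α := mul_nonneg hμ hα.le
  have hdir : (μ * α) • z + (1 - μ * α) • x - x = (μ * α) • (z - x) := by module
  have hconv : h ((μ * α) • z + (1 - μ * α) • x) ≤ μ * α * h z + (1 - μ * α) * h x :=
    hh.2 (Set.mem_univ z) (Set.mem_univ x) ha (by linarith) (by ring)
  have hquad : 1 / (2 * α) * ‖(μ * α) • (z - x)‖ ^ 2 = μ * α * (μ / 2 * ‖z - x‖ ^ 2) := by
    rw [norm_smul, Real.norm_of_nonneg ha]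
    field_simp
  rw [proxModel, hdir, hquad, inner_sub_left, real_inner_smul_right, real_inner_smul_right]
  linear_combination hconv + μ * α * hsc

end

theorem stmt_2_general {n : ℕ} (f : EuclideanSpace ℝ (Fin n) → ℝ)
    (f' : EuclideanSpace ℝ (Fin n) → EuclideanSpace ℝ (Fin n))
    (h : EuclideanSpace ℝ (Fin n) → ℝ)
    (μ L αk : ℝ) (hμ : 0 < μ) (hL : 0 < L) (hαk : 0 < αk) (hμα : μ * αk ≤ 1)
    (hgrad : ∀ x, HasGradientAt f (f' x) x)
    (hsc : ∀ x y, f y + ⟪f' y, x - y⟫ + μ / 2 * ‖x - y‖ ^ 2 ≤ f x)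
    (hconvh : ConvexOn ℝ Set.univ h)
    (hlip : LipschitzWith L.toNNReal f')
    (xs : EuclideanSpace ℝ (Fin n))
    (xk gk xkp1 : EuclideanSpace ℝ (Fin n))
    (hstep : ∀ x, f xk + ⟪gk, xkp1 - xk⟫ + 1 / (2 * αk) * ‖xkp1 - xk‖ ^ 2 + h xkp1
      ≤ f xk + ⟪gk, x - xk⟫ + 1 / (2 * αk) * ‖x - xk‖ ^ 2 + h x) :
    (f xkp1 + h xkp1) - (f xs + h xs)
      ≤ (1 - μ * αk) * ((f xk + h xk) - (f xs + h xs))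
        + ⟪f' xk - gk, xkp1 - xk⟫
        + ⟪gk - f' xk, ((μ * αk) • xs + (1 - μ * αk) • xk) - xk⟫
        - (1 / (2 * αk) - L / 2) * ‖xkp1 - xk‖ ^ 2 := by
  set xt := (μ * αk) • xs + (1 - μ * αk) • xk
  have hupper := add_le_proxModel_add_inner (h := h) hgrad hlip gk αk xk xkp1
  rw [Real.coe_toNNReal L hL.le] at hupper
  have hopt : proxModel f h gk αk xk xkp1 ≤ proxModel f h gk αk xk xt := hstep xt
  have hmodel := proxModel_convexCombination_le hμ.le hαk hμα hconvh (hsc xs xk) gk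
  linear_combination hupper + hopt + hmodel

/-- Pathwise version of Lemma 1: one-step decrease inequality of the proximal
gradient step with an inexact gradient `gₖ`, for `f` μ-strongly convex with
L-Lipschitz gradient and `h` proper closed convex. -/
theorem stmt_2 {n : ℕ} (f : EuclideanSpace ℝ (Fin n) → ℝ)
    (f' : EuclideanSpace ℝ (Fin n) → EuclideanSpace ℝ (Fin n))
    (h : EuclideanSpace ℝ (Fin n) → ℝ)
    (μ L αk : ℝ) (hμ : 0 < μ) (hL : 0 < L) (hαk : 0 < αk) (hμα : μ * αk ≤ 1)
    (hgrad : ∀ x, HasGradientAt f (f' x) x)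
    (hsc : ∀ x y, f y + ⟪f' y, x - y⟫ + μ / 2 * ‖x - y‖ ^ 2 ≤ f x)
    (hconvh : ConvexOn ℝ Set.univ h) (hlsch : LowerSemicontinuous h)
    (hlip : LipschitzWith L.toNNReal f')
    (xs : EuclideanSpace ℝ (Fin n))
    (hmin : ∀ x, f xs + h xs ≤ f x + h x)
    (xk gk xkp1 : EuclideanSpace ℝ (Fin n))
    (hstep : ∀ x, f xk + ⟪gk, xkp1 - xk⟫ + 1 / (2 * αk) * ‖xkp1 - xk‖ ^ 2 + h xkp1
      ≤ f xk + ⟪gk, x - xk⟫ + 1 / (2 * αk) * ‖x - xk‖ ^ 2 + h x) :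
    (f xkp1 + h xkp1) - (f xs + h xs)
      ≤ (1 - μ * αk) * ((f xk + h xk) - (f xs + h xs))
        + ⟪f' xk - gk, xkp1 - xk⟫
        + ⟪gk - f' xk, ((μ * αk) • xs + (1 - μ * αk) • xk) - xk⟫
        - (1 / (2 * αk) - L / 2) * ‖xkp1 - xk‖ ^ 2 :=
  stmt_2_general f f' h μ L αk hμ hL hαk hμα hgrad hsc hconvh hlip xs xk gk xkp1 hstep
end

section
/- Under the hypotheses of the previous lemma with constant step $\alpha = (1-\eta)/L$, if the iterates $\{x_k\}$ of the stochastic proximal gradient method satisfy the condition $\alpha\mathbb{E}_k[(\nabla f(x_k) - g_k)^T(x_{k+1} - x_k)] \le \frac{\eta}{2}\mathbb{E}_k[\|x_{k+1} - x_k\|^2]$ at every iteration, then for every $k \ge 1$: $\mathbb{E}[\phi(x_k) - \phi^*] \le \frac{L\|x_0 - x^*\|^2}{2(1-\eta)k}$, where $x^*$ is any minimizer of $\phi$. -/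
/-!
Write `c = 1/(2α)`, so that `c - L/2 = η c`. Combining the descent lemma for the `L`-smooth `f`,
the gradient inequality for the convex `f` and the three-point property of the proximal step gives,
for every `z`, the deterministic inequality of Lemma 3.2:
  `φ(x_{k+1}) ≤ φ(z) + c (‖z - x_k‖² - ‖z - x_{k+1}‖²) + ⟪∇f(x_k) - g_k, x_{k+1} - z⟫`
    `- η c ‖x_{k+1} - x_k‖²`.
In expectation the inner product splits as `⟪∇f(x_k) - g_k, x_{k+1} - x_k⟫`, which the fundamental
condition bounds by `η c 𝔼‖x_{k+1} - x_k‖²`, plus `⟪∇f(x_k) - g_k, x_k - z⟫`, which has mean zero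
by unbiasedness whenever `z` is `𝕋_k`-measurable. Taking `z = x_k` shows that `𝔼 φ(x_k)` is
nonincreasing, taking `z = x*` makes the right-hand side telescope, and together they give
`k (𝔼 φ(x_k) - φ*) ≤ c ‖x_0 - x*‖²`.
-/

open MeasureTheory
open scoped RealInnerProductSpace NNReal

section Deterministic

variable {E : Type*} [NormedAddCommGroup E] [InnerProductSpace ℝ E]

theorem ConvexOn.add_mul_norm_sub_sq_le_of_isMinOn {h : E → ℝ} (hconv : ConvexOn ℝ Set.univ h)
    {c : ℝ} {p u : E} (hp : IsMinOn (fun x => h x + c * ‖x - u‖ ^ 2) Set.univ p) (z : E) :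
    h p + c * ‖p - u‖ ^ 2 + c * ‖z - p‖ ^ 2 ≤ h z + c * ‖z - u‖ ^ 2 := by
  set A := h z - h p + 2 * c * ⟪p - u, z - p⟫
  have hsegment : ∀ t ∈ Set.Ioc (0 : ℝ) 1, 0 ≤ A + t * (c * ‖z - p‖ ^ 2) := by
    rintro t ⟨ht0, ht1⟩
    have hmin : h p + c * ‖p - u‖ ^ 2 ≤ h (p + t • (z - p)) + c * ‖p + t • (z - p) - u‖ ^ 2 :=
      isMinOn_univ_iff.1 hp _
    have hconvt : h (p + t • (z - p)) ≤ (1 - t) * h p + t * h z := by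
      have := hconv.2 (Set.mem_univ p) (Set.mem_univ z) (sub_nonneg.2 ht1) ht0.le (by ring)
      rwa [show (1 - t) • p + t • z = p + t • (z - p) by module, smul_eq_mul, smul_eq_mul] at this
    have hexpand : ‖p + t • (z - p) - u‖ ^ 2
        = ‖p - u‖ ^ 2 + 2 * t * ⟪p - u, z - p⟫ + t ^ 2 * ‖z - p‖ ^ 2 := by
      rw [show p + t • (z - p) - u = (p - u) + t • (z - p) by abel, norm_add_sq_real,
        real_inner_smul_right, norm_smul, mul_pow, Real.norm_eq_abs, sq_abs]
      ring
    have : 0 ≤ t * (A + t * (c * ‖z - p‖ ^ 2)) := by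
      rw [hexpand] at hmin
      linear_combination hmin + hconvt
    exact nonneg_of_mul_nonneg_right (by linarith) ht0
  have hA : 0 ≤ A := by
    have hlim : Filter.Tendsto (fun t : ℝ => A + t * (c * ‖z - p‖ ^ 2))
        (nhdsWithin 0 (Set.Ioi 0)) (nhds A) := by
      have : Continuous (fun t : ℝ => A + t * (c * ‖z - p‖ ^ 2)) := by fun_prop
      simpa using (this.tendsto 0).mono_left nhdsWithin_le_nhds
    refine ge_of_tendsto hlim ?_
    filter_upwards [Ioc_mem_nhdsGT (zero_lt_one' ℝ)] with t ht using hsegment t ht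
  have hexpand : ‖z - u‖ ^ 2 = ‖z - p‖ ^ 2 + 2 * ⟪p - u, z - p⟫ + ‖p - u‖ ^ 2 := by
    rw [show z - u = (z - p) + (p - u) by abel, norm_add_sq_real, real_inner_comm]
  rw [hexpand]
  linear_combination hA

variable [CompleteSpace E] {f : E → ℝ}

theorem HasGradientAt.hasDerivAt_comp_add_smul {g x v : E} {t : ℝ}
    (hf : HasGradientAt f g (x + t • v)) :
    HasDerivAt (fun s : ℝ => f (x + s • v)) ⟪g, v⟫ t := by
  have hline : HasDerivAt (fun s : ℝ => x + s • v) v t := by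
    simpa using ((hasDerivAt_id t).smul_const v).const_add x
  simpa [Function.comp_def] using hf.hasFDerivAt.comp_hasDerivAt t hline

theorem ConvexOn.add_inner_le_of_hasGradientAt (hconv : ConvexOn ℝ Set.univ f) {x g : E}
    (hf : HasGradientAt f g x) (y : E) : f x + ⟪g, y - x⟫ ≤ f y := by
  have hline : ConvexOn ℝ Set.univ (fun t : ℝ => f (x + t • (y - x))) := by
    simpa [Function.comp_def, AffineMap.lineMap_apply_module', add_comm] using
      hconv.comp_affineMap (AffineMap.lineMap x y)
  have hderiv : HasDerivAt (fun t : ℝ => f (x + t • (y - x))) ⟪g, y - x⟫ 0 :=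
    HasGradientAt.hasDerivAt_comp_add_smul (by simpa using hf)
  have := hline.le_slope_of_hasDerivAt (Set.mem_univ 0) (Set.mem_univ 1) zero_lt_one hderiv
  simp only [slope_def_field, zero_smul, add_zero, one_smul, add_sub_cancel, sub_zero,
    div_one] at this
  linarith

theorem le_add_inner_add_of_lipschitzWith {f' : E → E} (hgrad : ∀ x, HasGradientAt f (f' x) x)
    {K : ℝ≥0} (hlip : LipschitzWith K f') (x y : E) :
    f y ≤ f x + ⟪f' x, y - x⟫ + K / 2 * ‖y - x‖ ^ 2 := by
  set v := y - x
  set G : ℝ → ℝ := fun t => f (x + t • v) - t * ⟪f' x, v⟫ - K / 2 * t ^ 2 * ‖v‖ ^ 2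
  have hG : ∀ t, HasDerivAt G (⟪f' (x + t • v), v⟫ - ⟪f' x, v⟫ - K * t * ‖v‖ ^ 2) t := by
    intro t
    have := (((hgrad (x + t • v)).hasDerivAt_comp_add_smul).sub
      ((hasDerivAt_id t).mul_const ⟪f' x, v⟫)).sub
      (((hasDerivAt_pow 2 t).const_mul (K / 2 : ℝ)).mul_const (‖v‖ ^ 2))
    exact this.congr_deriv (by ring)
  have hG' : ∀ t ∈ interior (Set.Ici (0 : ℝ)),
      ⟪f' (x + t • v), v⟫ - ⟪f' x, v⟫ - K * t * ‖v‖ ^ 2 ≤ 0 := by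
    intro t ht
    rw [interior_Ici, Set.mem_Ioi] at ht
    have hnorm : ‖f' (x + t • v) - f' x‖ ≤ K * (t * ‖v‖) := by
      simpa [norm_smul, abs_of_pos ht] using hlip.norm_sub_le (x + t • v) x
    calc ⟪f' (x + t • v), v⟫ - ⟪f' x, v⟫ - K * t * ‖v‖ ^ 2
        = ⟪f' (x + t • v) - f' x, v⟫ - K * (t * ‖v‖) * ‖v‖ := by rw [inner_sub_left]; ring
      _ ≤ ‖f' (x + t • v) - f' x‖ * ‖v‖ - K * (t * ‖v‖) * ‖v‖ := by
        gcongr; exact real_inner_le_norm _ _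
      _ ≤ 0 := by nlinarith [norm_nonneg v]
  have hanti : AntitoneOn G (Set.Ici 0) :=
    antitoneOn_of_hasDerivWithinAt_nonpos (convex_Ici 0)
      (fun t _ => (hG t).continuousAt.continuousWithinAt)
      (fun t _ => (hG t).hasDerivWithinAt) hG'
  have := hanti Set.self_mem_Ici (zero_le_one' ℝ) zero_le_one
  simp only [G, v, zero_smul, add_zero, zero_mul, sub_zero, one_smul, one_mul, add_sub_cancel,
    one_pow, ne_eq, OfNat.ofNat_ne_zero, not_false_eq_true, zero_pow, mul_zero] at this
  linarith

theorem proxGrad_objective_le {h : E → ℝ} {f' : E → E} {K : ℝ≥0} {α : ℝ} (hα : α ≠ 0)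
    (hgrad : ∀ x, HasGradientAt f (f' x) x) (hconvf : ConvexOn ℝ Set.univ f)
    (hconvh : ConvexOn ℝ Set.univ h) (hlip : LipschitzWith K f') {x g p : E}
    (hp : ∀ y, h p + 1 / (2 * α) * ‖p - (x - α • g)‖ ^ 2
      ≤ h y + 1 / (2 * α) * ‖y - (x - α • g)‖ ^ 2) (z : E) :
    f p + h p ≤ f z + h z + 1 / (2 * α) * (‖z - x‖ ^ 2 - ‖z - p‖ ^ 2)
      + ⟪f' x - g, p - z⟫ - (1 / (2 * α) - K / 2) * ‖p - x‖ ^ 2 := by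
  have hdescent := le_add_inner_add_of_lipschitzWith hgrad hlip x p
  have hconv := hconvf.add_inner_le_of_hasGradientAt (hgrad x) z
  have hprox := hconvh.add_mul_norm_sub_sq_le_of_isMinOn (isMinOn_univ_iff.2 hp) z
  have hexpand : ∀ w, 1 / (2 * α) * ‖w - (x - α • g)‖ ^ 2
      = 1 / (2 * α) * ‖w - x‖ ^ 2 + ⟪g, w - x⟫ + α / 2 * ‖g‖ ^ 2 := by
    intro w
    rw [show w - (x - α • g) = (w - x) + α • g by abel, norm_add_sq_real, real_inner_smul_right,
      norm_smul, mul_pow, Real.norm_eq_abs, sq_abs, real_inner_comm]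
    field_simp
  rw [hexpand, hexpand] at hprox
  have hinner : ⟪f' x - g, p - z⟫ = ⟪f' x, p - x⟫ - ⟪f' x, z - x⟫ - ⟪g, p - x⟫ + ⟪g, z - x⟫ := by
    rw [show p - z = (p - x) - (z - x) by abel, inner_sub_left, inner_sub_right (f' x),
      inner_sub_right g]
    ring
  rw [hinner]
  linarith

end Deterministic

section Expectation

variable {Ω : Type*} {m mΩ : MeasurableSpace Ω} {μ : Measure Ω}

theorem LipschitzWith.memLp_comp [IsFiniteMeasure μ] {E F : Type*} [NormedAddCommGroup E]
    [NormedAddCommGroup F] {g : E → F} {K : ℝ≥0} (hg : LipschitzWith K g) {p : ENNReal}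
    {X : Ω → E} (hX : MemLp X p μ) : MemLp (fun ω => g (X ω)) p μ := by
  have hg0 : LipschitzWith K (fun x => g x - g 0) :=
    LipschitzWith.of_dist_le_mul fun x y => by simpa [dist_sub_right] using hg.dist_le_mul x y
  convert (hg0.comp_memLp (by simp) hX).add (memLp_const (g 0)) using 1
  ext ω
  simp

variable {E : Type*} [NormedAddCommGroup E] [InnerProductSpace ℝ E]

theorem MeasureTheory.MemLp.integrable_inner {V W : Ω → E} (hV : MemLp V 2 μ)
    (hW : MemLp W 2 μ) : Integrable (fun ω => ⟪V ω, W ω⟫) μ :=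
  memLp_one_iff_integrable.1 <| (innerSL ℝ : E →L[ℝ] E →L[ℝ] ℝ).memLp_of_bilin 1 hV hW

theorem mul_integral_le_of_ae_mul_condExp_le (hm : m ≤ mΩ) [SigmaFinite (μ.trim hm)]
    {F G : Ω → ℝ} {a b : ℝ} (h : ∀ᵐ ω ∂μ, a * μ[F|m] ω ≤ b * μ[G|m] ω) :
    a * ∫ ω, F ω ∂μ ≤ b * ∫ ω, G ω ∂μ := by
  have := integral_mono_ae (integrable_condExp.const_mul a) (integrable_condExp.const_mul b) h
  rwa [integral_const_mul, integral_const_mul, integral_condExp hm, integral_condExp hm] at this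

variable [CompleteSpace E]

theorem condExp_sub_ae_eq_zero (hm : m ≤ mΩ) [SigmaFinite (μ.trim hm)] {F G : Ω → E}
    (hF : StronglyMeasurable[m] F) (hFi : Integrable F μ) (hG : Integrable G μ)
    (hGF : μ[G|m] =ᵐ[μ] F) : μ[fun ω => F ω - G ω|m] =ᵐ[μ] 0 := by
  have hFm : μ[F|m] = F := condExp_of_stronglyMeasurable hm hF hFi
  filter_upwards [condExp_sub hFi hG m, hGF] with ω hsub hω
  change μ[F - G|m] ω = 0
  rw [hsub, Pi.sub_apply, hFm, hω, sub_self]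

theorem integral_inner_eq_zero_of_condExp_ae_eq_zero (hm : m ≤ mΩ) [SigmaFinite (μ.trim hm)]
    {V W : Ω → E} (hV : StronglyMeasurable[m] V) (hW : Integrable W μ)
    (hWV : Integrable (fun ω => ⟪W ω, V ω⟫) μ) (hW0 : μ[W|m] =ᵐ[μ] 0) :
    ∫ ω, ⟪W ω, V ω⟫ ∂μ = 0 := by
  calc ∫ ω, ⟪W ω, V ω⟫ ∂μ = ∫ ω, (μ[fun ω => ⟪W ω, V ω⟫|m]) ω ∂μ := (integral_condExp hm).symm
    _ = ∫ ω, ⟪(μ[W|m]) ω, V ω⟫ ∂μ :=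
      integral_congr_ae (condExp_bilin_of_stronglyMeasurable_right (innerSL ℝ) hV hWV hW)
    _ = 0 := by
      rw [integral_congr_ae (g := fun _ => (0 : ℝ))]
      · simp
      filter_upwards [hW0] with ω hω
      simp [hω]

theorem integral_comp_le_of_le_add_inner [IsFiniteMeasure μ] (hm : m ≤ mΩ)
    {φ : E → ℝ} {c ρ : ℝ} {X₀ X₁ Z D : Ω → E}
    (hle : ∀ ω, φ (X₁ ω) ≤ φ (Z ω) + c * (‖Z ω - X₀ ω‖ ^ 2 - ‖Z ω - X₁ ω‖ ^ 2)
      + ⟪D ω, X₁ ω - Z ω⟫ - ρ * ‖X₁ ω - X₀ ω‖ ^ 2)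
    (hX₀ : StronglyMeasurable[m] X₀) (hZ : StronglyMeasurable[m] Z) (hD : μ[D|m] =ᵐ[μ] 0)
    (hX₀2 : MemLp X₀ 2 μ) (hX₁2 : MemLp X₁ 2 μ) (hZ2 : MemLp Z 2 μ) (hD2 : MemLp D 2 μ)
    (hφX₁ : Integrable (fun ω => φ (X₁ ω)) μ) (hφZ : Integrable (fun ω => φ (Z ω)) μ)
    (hfund : ∫ ω, ⟪D ω, X₁ ω - X₀ ω⟫ ∂μ ≤ ρ * ∫ ω, ‖X₁ ω - X₀ ω‖ ^ 2 ∂μ) :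
    ∫ ω, φ (X₁ ω) ∂μ ≤ ∫ ω, φ (Z ω) ∂μ
      + c * (∫ ω, ‖Z ω - X₀ ω‖ ^ 2 ∂μ - ∫ ω, ‖Z ω - X₁ ω‖ ^ 2 ∂μ) := by
  have hsq : ∀ {V W : Ω → E}, MemLp V 2 μ → MemLp W 2 μ →
      Integrable (fun ω => ‖V ω - W ω‖ ^ 2) μ :=
    fun hV hW => (memLp_two_iff_integrable_sq_norm (hV.sub hW).1).1 (hV.sub hW)
  have hcross : ∫ ω, ⟪D ω, X₀ ω - Z ω⟫ ∂μ = 0 :=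
    integral_inner_eq_zero_of_condExp_ae_eq_zero hm (hX₀.sub hZ) (hD2.integrable one_le_two)
      (hD2.integrable_inner (hX₀2.sub hZ2)) hD
  have hsplit : ∀ ω, ⟪D ω, X₁ ω - Z ω⟫ = ⟪D ω, X₁ ω - X₀ ω⟫ + ⟪D ω, X₀ ω - Z ω⟫ := fun ω => by
    rw [← inner_add_right, sub_add_sub_cancel]
  simp_rw [hsplit] at hle
  have hZ0 := hsq hZ2 hX₀2
  have hZ1 := hsq hZ2 hX₁2
  have h10 := hsq hX₁2 hX₀2
  have hi10 := hD2.integrable_inner (hX₁2.sub hX₀2)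
  have hi0Z := hD2.integrable_inner (hX₀2.sub hZ2)
  refine (integral_mono hφX₁ ?_ hle).trans ?_
  · apply_rules [Integrable.add, Integrable.neg, Integrable.const_mul]
  rw [integral_sub ?_ ?_, integral_add ?_ ?_, integral_add ?_ ?_, integral_add ?_ ?_,
    integral_const_mul, integral_sub ?_ ?_, integral_const_mul, hcross]
  · linarith
  all_goals apply_rules [Integrable.add, Integrable.neg, Integrable.const_mul]

end Expectation

theorem nat_mul_sub_add_le_of_antitone {u d : ℕ → ℝ} {a : ℝ} (hu : Antitone u)
    (hud : ∀ k, u (k + 1) - a ≤ d k - d (k + 1)) (k : ℕ) : k * (u k - a) + d k ≤ d 0 := by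
  induction k with
  | zero => simp
  | succ k ih =>
    have hmono : (k : ℝ) * (u (k + 1) - a) ≤ k * (u k - a) := by
      gcongr
      exact hu k.le_succ
    push_cast
    linarith [hud k]

theorem nat_mul_integral_sub_le_of_forall_integral_le {Ω E : Type*} [NormedAddCommGroup E]
    {mΩ : MeasurableSpace Ω} {μ : Measure Ω} [IsProbabilityMeasure μ]
    {m : ℕ → MeasurableSpace Ω} {φ : E → ℝ} {c : ℝ} (hc : 0 ≤ c) {X : ℕ → Ω → E}
    (hX : ∀ k, StronglyMeasurable[m k] (X k)) (hX2 : ∀ k, MemLp (X k) 2 μ)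
    (hφX : ∀ k, Integrable (fun ω => φ (X k ω)) μ)
    (hle : ∀ k {Z : Ω → E}, StronglyMeasurable[m k] Z → MemLp Z 2 μ →
      Integrable (fun ω => φ (Z ω)) μ → ∫ ω, φ (X (k + 1) ω) ∂μ
        ≤ ∫ ω, φ (Z ω) ∂μ + c * (∫ ω, ‖Z ω - X k ω‖ ^ 2 ∂μ - ∫ ω, ‖Z ω - X (k + 1) ω‖ ^ 2 ∂μ))
    (z : E) (k : ℕ) : k * (∫ ω, φ (X k ω) ∂μ - φ z) ≤ c * ∫ ω, ‖z - X 0 ω‖ ^ 2 ∂μ := by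
  have hanti : Antitone fun k => ∫ ω, φ (X k ω) ∂μ := by
    refine antitone_nat_of_succ_le fun k => ?_
    have hdecr := hle k (hX k) (hX2 k) (hφX k)
    have hdist : 0 ≤ c * ∫ ω, ‖X k ω - X (k + 1) ω‖ ^ 2 ∂μ :=
      mul_nonneg hc (integral_nonneg fun ω => by positivity)
    simp only [sub_self, norm_zero, ne_eq, OfNat.ofNat_ne_zero, not_false_eq_true, zero_pow,
      integral_zero, zero_sub, mul_neg] at hdecr
    linarith
  have hdesc k : ∫ ω, φ (X (k + 1) ω) ∂μ - φ z
      ≤ c * ∫ ω, ‖z - X k ω‖ ^ 2 ∂μ - c * ∫ ω, ‖z - X (k + 1) ω‖ ^ 2 ∂μ := by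
    have := hle k stronglyMeasurable_const (memLp_const z) (integrable_const (φ z))
    simp only [integral_const, probReal_univ, one_smul] at this
    linarith
  have hdist : 0 ≤ c * ∫ ω, ‖z - X k ω‖ ^ 2 ∂μ :=
    mul_nonneg hc (integral_nonneg fun ω => by positivity)
  linarith [nat_mul_sub_add_le_of_antitone hanti hdesc k]

theorem stmt_7_general {n : ℕ} {Ω : Type*} [MeasurableSpace Ω] (P : Measure Ω)
    [IsProbabilityMeasure P]
    -- the filtration `𝕋ₖ` generated by `x₀, g₀, …, g_{k-1}`:
    (m : ℕ → MeasurableSpace Ω) (hm : ∀ k, m k ≤ ‹MeasurableSpace Ω›)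
    (f : EuclideanSpace ℝ (Fin n) → ℝ)
    (f' : EuclideanSpace ℝ (Fin n) → EuclideanSpace ℝ (Fin n))
    (h : EuclideanSpace ℝ (Fin n) → ℝ)
    (L η α : ℝ) (hL : 0 < L) (hη1 : η < 1)
    (hα : α = (1 - η) / L)
    (hgrad : ∀ x, HasGradientAt f (f' x) x)
    (hconvf : ConvexOn ℝ Set.univ f)
    (hconvh : ConvexOn ℝ Set.univ h)
    (hlip : LipschitzWith L.toNNReal f')
    (xs : EuclideanSpace ℝ (Fin n))
    (X G : ℕ → Ω → EuclideanSpace ℝ (Fin n))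
    (x0 : EuclideanSpace ℝ (Fin n)) (hX0 : X 0 = fun _ => x0)
    -- adaptedness and measurability:
    (hadapted : ∀ k, StronglyMeasurable[m k] (X k))
    -- `x_{k+1} = prox_{α h}(xₖ - α gₖ)`:
    (hstep : ∀ k, ∀ ω, ∀ x,
      h (X (k + 1) ω) + 1 / (2 * α) * ‖X (k + 1) ω - (X k ω - α • G k ω)‖ ^ 2
        ≤ h x + 1 / (2 * α) * ‖x - (X k ω - α • G k ω)‖ ^ 2)
    -- unbiasedness `𝔼ₖ[gₖ] = ∇f(xₖ)`:
    (hunbiased : ∀ k, P[G k|m k] =ᵐ[P] fun ω => f' (X k ω))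
    -- integrability:
    (hX2 : ∀ k, MemLp (X k) 2 P) (hG2 : ∀ k, MemLp (G k) 2 P)
    (hint1 : ∀ k, Integrable (fun ω => f (X k ω) + h (X k ω)) P)
    -- the fundamental condition (2.8) at every iteration:
    (hfund : ∀ k, ∀ᵐ ω ∂P,
      α * (P[fun ω => ⟪f' (X k ω) - G k ω, X (k + 1) ω - X k ω⟫|m k]) ω
        ≤ η / 2 * (P[fun ω => ‖X (k + 1) ω - X k ω‖ ^ 2|m k]) ω) :
    ∀ k : ℕ, 1 ≤ k →
      (∫ ω, (f (X k ω) + h (X k ω)) ∂P) - (f xs + h xs)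
        ≤ L * ‖x0 - xs‖ ^ 2 / (2 * (1 - η) * k) := by
  have hη : 0 < 1 - η := sub_pos.2 hη1
  have hα0 : 0 < α := hα ▸ div_pos hη hL
  have hρ : 1 / (2 * α) - (L.toNNReal : ℝ) / 2 = η / 2 / α := by
    rw [Real.coe_toNNReal L hL.le, hα]
    field_simp [hη.ne']
    ring
  have hD k : P[fun ω => f' (X k ω) - G k ω|m k] =ᵐ[P] 0 :=
    condExp_sub_ae_eq_zero (hm k) (hlip.continuous.comp_stronglyMeasurable (hadapted k))
      ((hlip.memLp_comp (hX2 k)).integrable one_le_two) ((hG2 k).integrable one_le_two)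
      (hunbiased k)
  have hfund' k : ∫ ω, ⟪f' (X k ω) - G k ω, X (k + 1) ω - X k ω⟫ ∂P
      ≤ (1 / (2 * α) - (L.toNNReal : ℝ) / 2) * ∫ ω, ‖X (k + 1) ω - X k ω‖ ^ 2 ∂P := by
    rw [hρ, div_mul_eq_mul_div, le_div_iff₀ hα0, mul_comm]
    exact mul_integral_le_of_ae_mul_condExp_le (hm k) (hfund k)
  intro k hk
  have hrate := nat_mul_integral_sub_le_of_forall_integral_le (m := m) (φ := fun x => f x + h x)
    (c := 1 / (2 * α)) (by positivity) hadapted hX2 hint1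
    (fun k Z hZ hZ2 hφZ => integral_comp_le_of_le_add_inner (hm k) (φ := fun x => f x + h x)
      (fun ω => proxGrad_objective_le hα0.ne' hgrad hconvf hconvh hlip (hstep k ω) (Z ω))
      (hadapted k) hZ (hD k) (hX2 k) (hX2 (k + 1)) hZ2
      ((hlip.memLp_comp (hX2 k)).sub (hG2 k)) (hint1 (k + 1)) hφZ (hfund' k)) xs k
  simp only [hX0, integral_const, probReal_univ, one_smul] at hrate
  have hcoef : 2 * (1 - η) * (1 / (2 * α)) = L := by
    rw [hα]
    field_simp
  rw [le_div_iff₀ (by positivity), norm_sub_rev]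
  linear_combination mul_le_mul_of_nonneg_left hrate (by positivity : (0 : ℝ) ≤ 2 * (1 - η))
    + ‖xs - x0‖ ^ 2 * hcoef

/-- Theorem 3.3 of the paper: sublinear rate `𝔼[φ(xₖ) - φ*] ≤ L‖x₀-x*‖²/(2(1-η)k)`
for the stochastic proximal gradient method with constant step `α = (1-η)/L`
on a convex composite problem, under the fundamental condition at every
iteration. -/
theorem stmt_7 {n : ℕ} {Ω : Type*} [MeasurableSpace Ω] (P : Measure Ω)
    [IsProbabilityMeasure P]
    -- the filtration `𝕋ₖ` generated by `x₀, g₀, …, g_{k-1}`: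
    (m : ℕ → MeasurableSpace Ω) (hm : ∀ k, m k ≤ ‹MeasurableSpace Ω›)
    (hmono : Monotone m)
    (f : EuclideanSpace ℝ (Fin n) → ℝ)
    (f' : EuclideanSpace ℝ (Fin n) → EuclideanSpace ℝ (Fin n))
    (h : EuclideanSpace ℝ (Fin n) → ℝ)
    (L η α : ℝ) (hL : 0 < L) (hη0 : 0 < η) (hη1 : η < 1)
    (hα : α = (1 - η) / L)
    (hgrad : ∀ x, HasGradientAt f (f' x) x)
    (hconvf : ConvexOn ℝ Set.univ f)
    (hconvh : ConvexOn ℝ Set.univ h) (hlsch : LowerSemicontinuous h)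
    (hlip : LipschitzWith L.toNNReal f')
    -- `x*` minimizes `φ = f + h`:
    (xs : EuclideanSpace ℝ (Fin n)) (hmin : ∀ x, f xs + h xs ≤ f x + h x)
    (X G : ℕ → Ω → EuclideanSpace ℝ (Fin n))
    (x0 : EuclideanSpace ℝ (Fin n)) (hX0 : X 0 = fun _ => x0)
    -- adaptedness and measurability:
    (hadapted : ∀ k, StronglyMeasurable[m k] (X k))
    (hGmeas : ∀ k, StronglyMeasurable[m (k + 1)] (G k))
    -- `x_{k+1} = prox_{α h}(xₖ - α gₖ)`:
    (hstep : ∀ k, ∀ ω, ∀ x,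
      h (X (k + 1) ω) + 1 / (2 * α) * ‖X (k + 1) ω - (X k ω - α • G k ω)‖ ^ 2
        ≤ h x + 1 / (2 * α) * ‖x - (X k ω - α • G k ω)‖ ^ 2)
    -- unbiasedness `𝔼ₖ[gₖ] = ∇f(xₖ)`:
    (hunbiased : ∀ k, P[G k|m k] =ᵐ[P] fun ω => f' (X k ω))
    -- integrability:
    (hX2 : ∀ k, MemLp (X k) 2 P) (hG2 : ∀ k, MemLp (G k) 2 P)
    (hint1 : ∀ k, Integrable (fun ω => f (X k ω) + h (X k ω)) P)
    (hint2 : ∀ k, Integrable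
      (fun ω => ⟪f' (X k ω) - G k ω, X (k + 1) ω - X k ω⟫) P)
    -- the fundamental condition (2.8) at every iteration:
    (hfund : ∀ k, ∀ᵐ ω ∂P,
      α * (P[fun ω => ⟪f' (X k ω) - G k ω, X (k + 1) ω - X k ω⟫|m k]) ω
        ≤ η / 2 * (P[fun ω => ‖X (k + 1) ω - X k ω‖ ^ 2|m k]) ω) :
    ∀ k : ℕ, 1 ≤ k →
      (∫ ω, (f (X k ω) + h (X k ω)) ∂P) - (f xs + h xs)
        ≤ L * ‖x0 - xs‖ ^ 2 / (2 * (1 - η) * k) :=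
  stmt_7_general P m hm f f' h L η α hL hη1 hα hgrad hconvf hconvh hlip xs X G x0 hX0 hadapted hstep
    hunbiased hX2 hG2 hint1 hfund
end

section
/- Let $h$ be proper closed convex, $\alpha_k > 0$, $x_k \in \mathbb{R}^n$, and let $g_k$ be a square-integrable random vector with $\mathbb{E}_k[g_k] = \nabla f(x_k)$. Define $x_{k+1} = \mathrm{prox}_{\alpha_k h}(x_k - \alpha_k g_k)$ and $\hat{x}_{k+1} = \mathrm{prox}_{\alpha_k h}(x_k - \alpha_k \nabla f(x_k))$. Then $\mathbb{E}_k[(\nabla f(x_k) - g_k)^T(x_{k+1} - x_k)] \le \alpha_k \, \mathbb{E}_k[\|\nabla f(x_k) - g_k\|^2]$. -/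
open MeasureTheory
open scoped RealInnerProductSpace

/-!
Write `d = ∇f(xₖ) - gₖ` and split `⟪d, x_{k+1} - xₖ⟫ = ⟪d, x_{k+1} - x̂_{k+1}⟫ + ⟪d, x̂_{k+1} - xₖ⟫`.
The point `x̂_{k+1}` is deterministic and `𝔼ₖ[d] = 0`, so the second term has conditional mean
zero. The first is at most `‖d‖ ‖x_{k+1} - x̂_{k+1}‖ ≤ αₖ ‖d‖²`, because the proximal map is
nonexpansive; this in turn comes from the variational inequality
`⟪z - prox z, x - prox z⟫ ≤ α (h x - h (prox z))`, obtained by comparing `prox z` with the points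
of the segment towards `x` and letting them tend to `prox z`.
-/

open Filter Topology in
lemma le_of_forall_le_add_mul {a b c : ℝ} (h : ∀ t ∈ Set.Ioc (0 : ℝ) 1, a ≤ b + t * c) :
    a ≤ b := by
  have hlim : Tendsto (fun t : ℝ => b + t * c) (𝓝 0) (𝓝 (b + 0 * c)) :=
    tendsto_const_nhds.add (tendsto_id.mul_const c)
  rw [zero_mul, add_zero] at hlim
  exact ge_of_tendsto (hlim.mono_left nhdsWithin_le_nhds)
    (eventually_of_mem (Ioc_mem_nhdsGT one_pos) h)

section ProximalMap

variable {E : Type*} [NormedAddCommGroup E] [InnerProductSpace ℝ E]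

def IsProximalMap (h : E → ℝ) (α : ℝ) (prox : E → E) : Prop :=
  ∀ z x, h (prox z) + 1 / (2 * α) * ‖prox z - z‖ ^ 2 ≤ h x + 1 / (2 * α) * ‖x - z‖ ^ 2

variable {h : E → ℝ} {α : ℝ} {prox : E → E}

namespace IsProximalMap

theorem inner_le (hp : IsProximalMap h α prox) (hh : ConvexOn ℝ Set.univ h) (hα : 0 < α)
    (z x : E) : ⟪z - prox z, x - prox z⟫ ≤ α * (h x - h (prox z)) := by
  set p := prox z
  refine le_of_forall_le_add_mul (c := ‖x - p‖ ^ 2 / 2) fun t ⟨ht0, ht1⟩ => ?_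
  have hmin := hp z (p + t • (x - p))
  have hconv : h (p + t • (x - p)) ≤ (1 - t) * h p + t * h x := by
    have hseg : p + t • (x - p) = (1 - t) • p + t • x := by module
    simpa only [hseg, smul_eq_mul] using
      hh.2 (Set.mem_univ p) (Set.mem_univ x) (by linarith) ht0.le (by ring)
  have hexpand : ‖p + t • (x - p) - z‖ ^ 2
      = ‖p - z‖ ^ 2 + 2 * t * ⟪p - z, x - p⟫ + t ^ 2 * ‖x - p‖ ^ 2 := by
    rw [show p + t • (x - p) - z = (p - z) + t • (x - p) by abel, norm_add_sq_real,
      real_inner_smul_right, norm_smul, Real.norm_eq_abs, mul_pow, sq_abs]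
    ring
  rw [hexpand] at hmin
  have hscaled : 0 ≤ t * (2 * α * (h x - h p) + 2 * ⟪p - z, x - p⟫ + t * ‖x - p‖ ^ 2) := by
    have key : 0 ≤ t * (h x - h p)
        + 1 / (2 * α) * (2 * t * ⟪p - z, x - p⟫ + t ^ 2 * ‖x - p‖ ^ 2) := by linarith
    field_simp at key
    linarith
  have hflip : ⟪z - p, x - p⟫ = -⟪p - z, x - p⟫ := by
    rw [← inner_neg_left, neg_sub]
  have := nonneg_of_mul_nonneg_right hscaled ht0
  linarith

theorem norm_sub_sq_le_inner (hp : IsProximalMap h α prox) (hh : ConvexOn ℝ Set.univ h)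
    (hα : 0 < α) (z w : E) : ‖prox z - prox w‖ ^ 2 ≤ ⟪z - w, prox z - prox w⟫ := by
  have hz := hp.inner_le hh hα z (prox w)
  have hw := hp.inner_le hh hα w (prox z)
  have hid : ⟪z - w, prox z - prox w⟫ - ‖prox z - prox w‖ ^ 2
      = -(⟪z - prox z, prox w - prox z⟫ + ⟪w - prox w, prox z - prox w⟫) := by
    rw [← real_inner_self_eq_norm_sq]
    simp only [inner_sub_left, inner_sub_right, real_inner_comm]
    ring
  linarith

theorem norm_sub_le (hp : IsProximalMap h α prox) (hh : ConvexOn ℝ Set.univ h) (hα : 0 < α)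
    (z w : E) : ‖prox z - prox w‖ ≤ ‖z - w‖ := by
  have hfirm := hp.norm_sub_sq_le_inner hh hα z w
  have hcs := real_inner_le_norm (z - w) (prox z - prox w)
  nlinarith [norm_nonneg (prox z - prox w), norm_nonneg (z - w)]

theorem inner_sub_le (hp : IsProximalMap h α prox) (hh : ConvexOn ℝ Set.univ h) (hα : 0 < α)
    (x u g : E) :
    ⟪u - g, prox (x - α • g) - x⟫ ≤ α * ‖u - g‖ ^ 2 + ⟪u - g, prox (x - α • u) - x⟫ := by
  have hsplit : prox (x - α • g) - x
      = (prox (x - α • g) - prox (x - α • u)) + (prox (x - α • u) - x) := by abel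
  have hlip : ‖prox (x - α • g) - prox (x - α • u)‖ ≤ α * ‖u - g‖ := by
    have := hp.norm_sub_le hh hα (x - α • g) (x - α • u)
    rwa [show x - α • g - (x - α • u) = α • (u - g) by module, norm_smul,
      Real.norm_of_nonneg hα.le] at this
  calc ⟪u - g, prox (x - α • g) - x⟫
      = ⟪u - g, prox (x - α • g) - prox (x - α • u)⟫ + ⟪u - g, prox (x - α • u) - x⟫ := by
        rw [hsplit, inner_add_right]
    _ ≤ ‖u - g‖ * (α * ‖u - g‖) + ⟪u - g, prox (x - α • u) - x⟫ := by
        gcongr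
        exact (real_inner_le_norm _ _).trans (by gcongr)
    _ = α * ‖u - g‖ ^ 2 + ⟪u - g, prox (x - α • u) - x⟫ := by ring

end IsProximalMap

end ProximalMap

section CondExp

variable {Ω E : Type*} {m m₀ : MeasurableSpace Ω} {μ : Measure Ω}
  [NormedAddCommGroup E] [InnerProductSpace ℝ E] [CompleteSpace E]

theorem condExp_inner_const_right {F : Ω → E} (hF : Integrable F μ) (v : E) :
    μ[fun ω => ⟪F ω, v⟫|m] =ᵐ[μ] fun ω => ⟪μ[F|m] ω, v⟫ := by
  have := ((innerSL ℝ v).comp_condExp_comm (m := m) hF).symm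
  simpa only [Function.comp_def, innerSL_apply_apply, ← real_inner_comm v] using this

theorem condExp_inner_sub_eq_zero [IsFiniteMeasure μ] {G : Ω → E}
    (hG : Integrable G μ) {c : E} (hc : μ[G|m] =ᵐ[μ] fun _ => c) (v : E) :
    μ[fun ω => ⟪c - G ω, v⟫|m] =ᵐ[μ] 0 := by
  by_cases hm : m ≤ m₀
  swap
  · rw [condExp_of_not_le hm]
  have hsub : μ[(fun _ => c) - G|m] =ᵐ[μ] 0 := by
    filter_upwards [condExp_sub (integrable_const c) hG m, hc] with ω hsub hω
    rw [hsub, Pi.sub_apply, condExp_const hm, hω, sub_self, Pi.zero_apply]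
  filter_upwards [condExp_inner_const_right (m := m) ((integrable_const c).sub hG) v, hsub]
    with ω hinner hzero
  refine hinner.trans ?_
  rw [hzero, Pi.zero_apply, inner_zero_left, Pi.zero_apply]

end CondExp

/-- Key inequality of Theorem 3.4: with `x_{k+1} = prox_{αₖ h}(xₖ - αₖ gₖ)`,
`x̂_{k+1} = prox_{αₖ h}(xₖ - αₖ ∇f(xₖ))` and `𝔼ₖ[gₖ] = ∇f(xₖ)`, one has
`𝔼ₖ[(∇f(xₖ)-gₖ)ᵀ(x_{k+1}-xₖ)] ≤ αₖ 𝔼ₖ[‖∇f(xₖ)-gₖ‖²]`. -/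
theorem stmt_10 {n : ℕ} {Ω : Type*} [MeasurableSpace Ω] (P : Measure Ω)
    [IsProbabilityMeasure P] (m : MeasurableSpace Ω) (hm : m ≤ ‹MeasurableSpace Ω›)
    (h : EuclideanSpace ℝ (Fin n) → ℝ)
    (hconvh : ConvexOn ℝ Set.univ h) (hlsch : LowerSemicontinuous h)
    (αk : ℝ) (hαk : 0 < αk)
    (prox : EuclideanSpace ℝ (Fin n) → EuclideanSpace ℝ (Fin n))
    (hprox : ∀ z x, h (prox z) + 1 / (2 * αk) * ‖prox z - z‖ ^ 2
      ≤ h x + 1 / (2 * αk) * ‖x - z‖ ^ 2)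
    (xk gradfk : EuclideanSpace ℝ (Fin n))
    (G : Ω → EuclideanSpace ℝ (Fin n)) (hG2 : MemLp G 2 P)
    (hunbiased : P[G|m] =ᵐ[P] fun _ => gradfk)
    (X : Ω → EuclideanSpace ℝ (Fin n))
    (hX : X = fun ω => prox (xk - αk • G ω))
    (xhat : EuclideanSpace ℝ (Fin n)) (hxhat : xhat = prox (xk - αk • gradfk))
    (hint : Integrable (fun ω => ⟪gradfk - G ω, X ω - xk⟫) P) :
    ∀ᵐ ω ∂P,
      (P[fun ω => ⟪gradfk - G ω, X ω - xk⟫|m]) ω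
        ≤ αk * (P[fun ω => ‖gradfk - G ω‖ ^ 2|m]) ω := by
  subst hX
  have hD2 : MemLp (fun ω => gradfk - G ω) 2 P := (memLp_const gradfk).sub hG2
  have hsq : Integrable (fun ω => ‖gradfk - G ω‖ ^ 2) P := hD2.integrable_norm_pow two_ne_zero
  have hlin : Integrable (fun ω => ⟪gradfk - G ω, xhat - xk⟫) P :=
    (hD2.integrable one_le_two).inner_const _
  have hmono := condExp_mono (m := m) hint ((hsq.const_mul αk).add hlin)
    (ae_of_all _ fun ω => hxhat ▸ IsProximalMap.inner_sub_le hprox hconvh hαk xk gradfk (G ω))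
  filter_upwards [hmono, condExp_add (hsq.const_mul αk) hlin m,
    condExp_smul (m := m) (μ := P) αk (fun ω => ‖gradfk - G ω‖ ^ 2),
    condExp_inner_sub_eq_zero (hG2.integrable one_le_two) hunbiased
      (xhat - xk)] with ω hle hadd hsmul hzero
  rw [hadd, Pi.add_apply, hzero, Pi.zero_apply, add_zero] at hle
  exact hle.trans_eq hsmul
end
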